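/- arXiv:1006.0155 — 6 statements merged into one kernel-verified Lean document; each statement's English description precedes it below -/
import Mathlib

section
/- For every q with 0 < q < 2, there exist constants C1, C2 > 0 (depending on q) such that for all β > 0, C1·exp(C1·β^(2/(2−q))) ≤ ∫_{-∞}^{∞} exp(β|x|^q − x²/2) dx ≤ C2·exp(C2·β^(2/(2−q))). -/
/-! With `s = β ^ (2 / (2 - q))`, the exponent `β |x| ^ q - x ^ 2 / 2` is of order `s` on the
scale `|x| ≈ √s = β ^ (1 / (2 - q))`. For the upper bound, Young's inequality
`β |x| ^ q ≤ x ^ 2 / 4 + 4 ^ (q / (2 - q)) s` dominates the integrand by a Gaussian. For the lower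
bound, the exponent is at least `s / 4 - 3 / 2` on the unit interval `[√s, √s + 1]`. -/

open Real MeasureTheory Set

lemma rpow_one_div_sq (β q : ℝ) (hβ : 0 ≤ β) :
    (β ^ (1 / (2 - q))) ^ 2 = β ^ (2 / (2 - q)) := by
  rw [← rpow_natCast, ← rpow_mul hβ]
  ring_nf

lemma mul_rpow_one_div_rpow {β q : ℝ} (hβ : 0 < β) (hq2 : q ≠ 2) :
    β * (β ^ (1 / (2 - q))) ^ q = β ^ (2 / (2 - q)) := by
  have h2q : 2 - q ≠ 0 := sub_ne_zero.2 hq2.symm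
  have hexp : 1 + 1 / (2 - q) * q = 2 / (2 - q) := by
    field_simp
    ring
  rw [← rpow_mul hβ.le, ← rpow_one_add' hβ.le (hexp ▸ div_ne_zero two_ne_zero h2q), hexp]

lemma mul_rpow_le_sq_div_four_add {β q t : ℝ} (hβ : 0 < β) (hq0 : 0 ≤ q) (hq2 : q < 2)
    (ht : 0 ≤ t) :
    β * t ^ q ≤ t ^ 2 / 4 + 4 ^ (q / (2 - q)) * β ^ (2 / (2 - q)) := by
  have h2q : 0 < 2 - q := by linarith
  set T := (4 * β) ^ (1 / (2 - q))
  have hT : 0 < T := by positivity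
  have hβT : β * T ^ q = 4 ^ (q / (2 - q)) * β ^ (2 / (2 - q)) := by
    have hT_eq : T = 4 ^ (1 / (2 - q)) * β ^ (1 / (2 - q)) := mul_rpow (by norm_num) hβ.le
    rw [hT_eq, mul_rpow (by positivity) (by positivity), ← rpow_mul (by norm_num : (0 : ℝ) ≤ 4),
      mul_left_comm, mul_rpow_one_div_rpow hβ hq2.ne]
    ring_nf
  -- `T` is where `β t ^ q = t ^ 2 / 4`: below it `β t ^ q ≤ β T ^ q`, above it `β t ^ q ≤ t ^ 2 / 4`
  rcases le_or_gt t T with htT | hTt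
  · have : β * t ^ q ≤ β * T ^ q := by gcongr
    nlinarith [sq_nonneg t]
  · have h4β : 4 * β ≤ t ^ (2 - q) := by
      have hT2 : T ^ (2 - q) = 4 * β := by
        simp only [T, one_div]
        exact rpow_inv_rpow (by positivity) h2q.ne'
      rw [← hT2]
      gcongr
    have hsplit : t ^ (2 - q) * t ^ q = t ^ 2 := by
      rw [← rpow_add (hT.trans hTt), sub_add_cancel, rpow_two]
    have : 4 * β * t ^ q ≤ t ^ (2 - q) * t ^ q := by gcongr
    have : 0 ≤ 4 ^ (q / (2 - q)) * β ^ (2 / (2 - q)) := by positivity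
    nlinarith

lemma le_integral_of_le_on_Icc {f : ℝ → ℝ} (hf : Integrable f) (hf0 : 0 ≤ f) {a c : ℝ}
    (h : ∀ x ∈ Icc a (a + 1), c ≤ f x) : c ≤ ∫ x, f x := by
  calc c = c * volume.real (Icc a (a + 1)) := by simp
    _ ≤ ∫ x in Icc a (a + 1), f x :=
        setIntegral_ge_of_const_le_real measurableSet_Icc (by simp) h hf.integrableOn
    _ ≤ ∫ x, f x := setIntegral_le_integral hf (.of_forall hf0)

section Integrand

variable {β q : ℝ}

lemma continuous_exp_mul_abs_rpow_sub_sq (hq0 : 0 ≤ q) :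
    Continuous fun x : ℝ => exp (β * |x| ^ q - x ^ 2 / 2) := by
  have : Continuous fun x : ℝ => |x| ^ q := continuous_abs.rpow_const fun _ => Or.inr hq0
  fun_prop

lemma exp_mul_abs_rpow_sub_sq_le (hβ : 0 < β) (hq0 : 0 ≤ q) (hq2 : q < 2) (x : ℝ) :
    exp (β * |x| ^ q - x ^ 2 / 2) ≤
      exp (4 ^ (q / (2 - q)) * β ^ (2 / (2 - q))) * exp (-(1 / 4) * x ^ 2) := by
  rw [← exp_add, exp_le_exp]
  have := mul_rpow_le_sq_div_four_add hβ hq0 hq2 (abs_nonneg x)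
  rw [sq_abs] at this
  linarith

lemma integrable_exp_mul_abs_rpow_sub_sq (hβ : 0 < β) (hq0 : 0 ≤ q) (hq2 : q < 2) :
    Integrable fun x : ℝ => exp (β * |x| ^ q - x ^ 2 / 2) :=
  ((integrable_exp_neg_mul_sq (by norm_num : (0 : ℝ) < 1 / 4)).const_mul _).mono'
    (continuous_exp_mul_abs_rpow_sub_sq hq0).aestronglyMeasurable
    (.of_forall fun x => by
      rw [norm_of_nonneg (exp_pos _).le]
      exact exp_mul_abs_rpow_sub_sq_le hβ hq0 hq2 x)

lemma integral_exp_mul_abs_rpow_sub_sq_le (hβ : 0 < β) (hq0 : 0 ≤ q) (hq2 : q < 2) :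
    ∫ x : ℝ, exp (β * |x| ^ q - x ^ 2 / 2) ≤
      √(π / (1 / 4)) * exp (4 ^ (q / (2 - q)) * β ^ (2 / (2 - q))) := by
  calc ∫ x : ℝ, exp (β * |x| ^ q - x ^ 2 / 2)
      ≤ ∫ x : ℝ, exp (4 ^ (q / (2 - q)) * β ^ (2 / (2 - q))) * exp (-(1 / 4) * x ^ 2) :=
        integral_mono (integrable_exp_mul_abs_rpow_sub_sq hβ hq0 hq2)
          ((integrable_exp_neg_mul_sq (by norm_num)).const_mul _)
          (exp_mul_abs_rpow_sub_sq_le hβ hq0 hq2)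
    _ = √(π / (1 / 4)) * exp (4 ^ (q / (2 - q)) * β ^ (2 / (2 - q))) := by
        rw [integral_const_mul, integral_gaussian, mul_comm]

lemma exp_mul_le_integral_exp_mul_abs_rpow_sub_sq (hβ : 0 < β) (hq0 : 0 ≤ q) (hq2 : q < 2) :
    exp (-(3 / 2)) * exp (1 / 4 * β ^ (2 / (2 - q))) ≤
      ∫ x : ℝ, exp (β * |x| ^ q - x ^ 2 / 2) := by
  set t₀ := β ^ (1 / (2 - q))
  have ht₀ : 0 ≤ t₀ := by positivity
  have hsq := rpow_one_div_sq β q hβ.le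
  have hpow := mul_rpow_one_div_rpow hβ hq2.ne
  rw [← exp_add]
  refine le_integral_of_le_on_Icc (a := t₀) (integrable_exp_mul_abs_rpow_sub_sq hβ hq0 hq2)
    (fun _ => (exp_pos _).le) fun x hx => exp_le_exp.2 ?_
  have : β * t₀ ^ q ≤ β * |x| ^ q := by
    rw [abs_of_nonneg (ht₀.trans hx.1)]
    gcongr
    exact hx.1
  -- `s = t₀ ^ 2 = β t₀ ^ q` and `(t₀ + 1) ^ 2 / 2 ≤ 3 s / 4 + 3 / 2`
  nlinarith [sq_nonneg (t₀ - 2), hx.1, hx.2]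

end Integrand

theorem stmt_0 (q : ℝ) (hq0 : 0 < q) (hq2 : q < 2) :
    ∃ C₁ C₂ : ℝ, 0 < C₁ ∧ 0 < C₂ ∧ ∀ β : ℝ, 0 < β →
      C₁ * Real.exp (C₁ * β ^ (2 / (2 - q))) ≤
        ∫ x : ℝ, Real.exp (β * |x| ^ q - x ^ 2 / 2) ∧
      (∫ x : ℝ, Real.exp (β * |x| ^ q - x ^ 2 / 2)) ≤
        C₂ * Real.exp (C₂ * β ^ (2 / (2 - q))) := by
  refine ⟨min (exp (-(3 / 2))) (1 / 4), max √(π / (1 / 4)) (4 ^ (q / (2 - q))),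
    by positivity, lt_max_of_lt_right (by positivity), fun β hβ => ⟨?_, ?_⟩⟩
  · refine le_trans ?_ (exp_mul_le_integral_exp_mul_abs_rpow_sub_sq hβ hq0.le hq2)
    gcongr
    exacts [min_le_left _ _, min_le_right _ _]
  · refine (integral_exp_mul_abs_rpow_sub_sq_le hβ hq0.le hq2).trans ?_
    gcongr
    exacts [le_max_left _ _, le_max_right _ _]
end

section
/- Let D ∈ (0, 1/2) and q > 0. The integral ∫_0^∞ ((1+x)^{2D} − x^{2D})^{q/2} dx is finite if and only if q > 1/(1/2 − D). -/
/-!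
By the mean value theorem `(1 + x)^a - x^a = a c^(a-1)` for some `c ∈ (x, 1 + x)`, so for
`0 < a ≤ 1` the integrand `((1 + x)^a - x^a)^p` is `Θ(x^((a-1)p))` at infinity. Being continuous,
it is integrable on `(0, ∞)` iff `x^((a-1)p)` is integrable at infinity, i.e. iff `(a-1)p < -1`;
for `a = 2D`, `p = q/2` this reads `q > 1/(1/2 - D)`.
-/

open Real Set MeasureTheory Filter Asymptotics

theorem Asymptotics.IsTheta.integrableAtFilter_iff {α E F : Type*} [MeasurableSpace α]
    [NormedAddCommGroup E] [NormedAddCommGroup F] {l : Filter α} [l.IsMeasurablyGenerated]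
    {μ : Measure α} {f : α → E} {g : α → F} (h : f =Θ[l] g)
    (hf : StronglyMeasurableAtFilter f l μ) (hg : StronglyMeasurableAtFilter g l μ) :
    IntegrableAtFilter f l μ ↔ IntegrableAtFilter g l μ :=
  ⟨h.2.integrableAtFilter hg, h.1.integrableAtFilter hf⟩

theorem Continuous.integrableOn_Ioi_iff_integrableAtFilter_atTop {E : Type*}
    [NormedAddCommGroup E] {f : ℝ → E} (hf : Continuous f) (a : ℝ) :
    IntegrableOn f (Ioi a) ↔ IntegrableAtFilter f atTop := by
  rw [← integrableOn_Ici_iff_integrableOn_Ioi, integrableOn_Ici_iff_integrableAtFilter_atTop]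
  exact and_iff_left (hf.locallyIntegrable.locallyIntegrableOn _)

namespace Real

variable {a x : ℝ}

theorem exists_one_add_rpow_sub_rpow_eq (hx : 0 < x) :
    ∃ c ∈ Ioo x (1 + x), (1 + x) ^ a - x ^ a = a * c ^ (a - 1) := by
  have hpos : ∀ t ∈ Icc x (1 + x), 0 < t := fun t ht => hx.trans_le ht.1
  obtain ⟨c, hc, hslope⟩ := exists_hasDerivAt_eq_slope (fun t => t ^ a) (fun t => a * t ^ (a - 1))
    (by linarith) (fun t ht => (continuousAt_rpow_const t a (.inl (hpos t ht).ne')).continuousWithinAt)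
    (fun t ht => hasDerivAt_rpow_const (.inl (hpos t (Ioo_subset_Icc_self ht)).ne'))
  refine ⟨c, hc, ?_⟩
  rw [hslope, add_sub_cancel_right, div_one]

theorem one_add_rpow_sub_rpow_le (ha0 : 0 ≤ a) (ha1 : a ≤ 1) (hx : 0 < x) :
    (1 + x) ^ a - x ^ a ≤ a * x ^ (a - 1) := by
  obtain ⟨c, hc, heq⟩ := exists_one_add_rpow_sub_rpow_eq (a := a) hx
  rw [heq]
  exact mul_le_mul_of_nonneg_left (rpow_le_rpow_of_nonpos hx hc.1.le (by linarith)) ha0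

theorem mul_two_mul_rpow_le_one_add_rpow_sub_rpow (ha0 : 0 ≤ a) (ha1 : a ≤ 1) (hx : 1 ≤ x) :
    a * (2 * x) ^ (a - 1) ≤ (1 + x) ^ a - x ^ a := by
  have hx0 : 0 < x := by linarith
  obtain ⟨c, hc, heq⟩ := exists_one_add_rpow_sub_rpow_eq (a := a) hx0
  rw [heq]
  exact mul_le_mul_of_nonneg_left
    (rpow_le_rpow_of_nonpos (hx0.trans hc.1) (by linarith [hc.2]) (by linarith)) ha0

theorem one_add_rpow_sub_rpow_nonneg (ha : 0 ≤ a) (hx : 0 ≤ x) : 0 ≤ (1 + x) ^ a - x ^ a :=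
  sub_nonneg.2 (rpow_le_rpow hx (by linarith) ha)

theorem one_add_rpow_sub_rpow_isTheta (ha0 : 0 < a) (ha1 : a ≤ 1) :
    (fun x : ℝ => (1 + x) ^ a - x ^ a) =Θ[atTop] fun x => x ^ (a - 1) := by
  refine ⟨IsBigO.of_bound a ?_, IsBigO.of_bound (2 ^ (1 - a) / a) ?_⟩
  · filter_upwards [eventually_gt_atTop 0] with x hx
    rw [norm_of_nonneg (one_add_rpow_sub_rpow_nonneg ha0.le hx.le),
      norm_of_nonneg (by positivity)]
    exact one_add_rpow_sub_rpow_le ha0.le ha1 hx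
  · filter_upwards [eventually_ge_atTop 1] with x hx
    have hx0 : 0 < x := by linarith
    rw [norm_of_nonneg (one_add_rpow_sub_rpow_nonneg ha0.le hx0.le),
      norm_of_nonneg (by positivity)]
    calc x ^ (a - 1) = 2 ^ (1 - a) / a * (a * (2 * x) ^ (a - 1)) := by
          rw [mul_rpow zero_le_two hx0.le, ← mul_assoc, ← mul_assoc, div_mul_cancel₀ _ ha0.ne',
            ← rpow_add two_pos, show 1 - a + (a - 1) = 0 by ring, rpow_zero, one_mul]
      _ ≤ 2 ^ (1 - a) / a * ((1 + x) ^ a - x ^ a) := by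
          gcongr
          exact mul_two_mul_rpow_le_one_add_rpow_sub_rpow ha0.le ha1 hx

theorem integrableOn_Ioi_one_add_rpow_sub_rpow_rpow_iff {p : ℝ} (ha0 : 0 < a) (ha1 : a ≤ 1)
    (hp : 0 ≤ p) :
    IntegrableOn (fun x : ℝ => ((1 + x) ^ a - x ^ a) ^ p) (Ioi 0) ↔ (a - 1) * p < -1 := by
  have hcont : Continuous fun x : ℝ => ((1 + x) ^ a - x ^ a) ^ p :=
    ((continuous_rpow_const ha0.le).comp (continuous_const.add continuous_id) |>.sub
      (continuous_rpow_const ha0.le)).rpow_const fun _ => .inr hp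
  have hpow : (fun x : ℝ => ((1 + x) ^ a - x ^ a) ^ p) =Θ[atTop] fun x => x ^ ((a - 1) * p) := by
    refine ((one_add_rpow_sub_rpow_isTheta ha0 ha1).rpow ?_ ?_).trans_eventuallyEq ?_ <;>
      filter_upwards [eventually_ge_atTop 0] with x hx
    · exact one_add_rpow_sub_rpow_nonneg ha0.le hx
    · exact rpow_nonneg hx _
    · exact (rpow_mul hx _ _).symm
  rw [hcont.integrableOn_Ioi_iff_integrableAtFilter_atTop,
    hpow.integrableAtFilter_iff (hcont.stronglyMeasurableAtFilter _ _)
      (measurable_id.pow_const _).aestronglyMeasurable.stronglyMeasurableAtFilter,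
    integrableAtFilter_rpow_atTop_iff]

end Real

theorem stmt_3 (D q : ℝ) (hD0 : 0 < D) (hD : D < 1/2) (hq : 0 < q) :
    MeasureTheory.IntegrableOn
      (fun x : ℝ => ((1 + x) ^ (2 * D) - x ^ (2 * D)) ^ (q / 2)) (Set.Ioi 0)
    ↔ q > 1 / (1/2 - D) := by
  rw [integrableOn_Ioi_one_add_rpow_sub_rpow_rpow_iff (by positivity) (by linarith) (by positivity),
    gt_iff_lt, div_lt_iff₀ (by linarith)]
  constructor <;> intro h <;> linarith
end

section
/- Let S ~ Exp(1) and D ∈ (0, 1/2). Then, as h ↓ 0, for every q with 0 < q < (1/2 − D)^{−1}, E[((S + h)^{2D} − S^{2D})^{q/2}] / h^{q/2} converges to (2D)^{q/2}·Γ(1 − q(1/2 − D)). -/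
open Real Set Filter Topology MeasureTheory

/-- Concavity-type bound: for `0 < p < 1`, `(s+h)^p - s^p ≤ p * s^(p-1) * h`. -/
lemma aux_rpow_diff_le {p : ℝ} (hp0 : 0 < p) (hp1 : p < 1) {s h : ℝ}
    (hs : 0 < s) (hh : 0 < h) :
    (s + h) ^ p - s ^ p ≤ p * s ^ (p - 1) * h := by
  have hlt : s < s + h := lt_add_of_pos_right s hh
  obtain ⟨c, hc, hcslope⟩ := exists_hasDerivAt_eq_slope (fun x => x ^ p)
    (fun x => p * x ^ (p - 1)) hlt
    (ContinuousOn.rpow_const continuousOn_id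
      (fun x hx => Or.inl (hs.trans_le hx.1).ne'))
    (fun x hx => Real.hasDerivAt_rpow_const (Or.inl (hs.trans hx.1).ne'))
  have hcs : s ≤ c := hc.1.le
  have hcb : c ^ (p - 1) ≤ s ^ (p - 1) :=
    Real.rpow_le_rpow_of_nonpos hs hcs (by linarith)
  have h1 : ((s + h) ^ p - s ^ p) / (s + h - s) = p * c ^ (p - 1) := hcslope.symm
  have h2 : (s + h) ^ p - s ^ p = p * c ^ (p - 1) * h := by
    have : s + h - s = h := by ring
    rw [this] at h1
    field_simp at h1
    linarith [h1]
  rw [h2]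
  have : p * c ^ (p - 1) ≤ p * s ^ (p - 1) := by
    exact mul_le_mul_of_nonneg_left hcb hp0.le
  exact mul_le_mul_of_nonneg_right this hh.le

theorem stmt_6 (D q : ℝ) (hD0 : 0 < D) (hD : D < 1/2)
    (hq0 : 0 < q) (hq : q < 1 / (1/2 - D)) :
    Filter.Tendsto
      (fun h : ℝ =>
        (∫ s in Set.Ioi (0:ℝ),
          ((s + h) ^ (2 * D) - s ^ (2 * D)) ^ (q / 2) * Real.exp (-s)) / h ^ (q / 2))
      (nhdsWithin 0 (Set.Ioi 0))
      (nhds ((2 * D) ^ (q / 2) * Real.Gamma (1 - q * (1/2 - D)))) := by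
  set p : ℝ := 2 * D with hp
  set r : ℝ := q / 2 with hr
  set a : ℝ := 1 - q * (1/2 - D) with ha
  have hp0 : 0 < p := by positivity
  have hp1 : p < 1 := by simp only [hp]; linarith
  have hr0 : 0 < r := by positivity
  have hhalf : 0 < 1/2 - D := by linarith
  have ha0 : 0 < a := by
    have h1 : q * (1/2 - D) < 1 := by
      have := mul_lt_mul_of_pos_right hq hhalf
      rw [div_mul_cancel₀ _ hhalf.ne'] at this
      linarith
    simp only [ha]; linarith
  have hexp : (p - 1) * r = a - 1 := by simp only [hp, hr, ha]; ring
  set g : ℝ → ℝ := fun s => p ^ r * (Real.exp (-s) * s ^ (a - 1)) with hg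
  have hgint : IntegrableOn g (Ioi 0) :=
    (Real.GammaIntegral_convergent ha0).const_mul _
  have hlim : ∀ s : ℝ, 0 < s →
      Tendsto (fun h : ℝ => ((s + h) ^ p - s ^ p) / h) (𝓝[>] 0) (𝓝 (p * s ^ (p - 1))) := by
    intro s hs
    have hd : HasDerivAt (fun x : ℝ => x ^ p) (p * s ^ (p - 1)) s :=
      Real.hasDerivAt_rpow_const (Or.inl hs.ne')
    have hslope := hasDerivAt_iff_tendsto_slope.mp hd
    have hmap : Tendsto (fun h : ℝ => s + h) (𝓝[>] 0) (𝓝[≠] s) := by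
      apply tendsto_nhdsWithin_of_tendsto_nhds_of_eventually_within
      · have : Tendsto (fun h : ℝ => s + h) (𝓝 0) (𝓝 (s + 0)) :=
          (continuous_const.add continuous_id).tendsto 0
        simpa using this.mono_left nhdsWithin_le_nhds
      · filter_upwards [self_mem_nhdsWithin] with h hh
        exact (lt_add_of_pos_right s hh).ne'
    have hcomp := hslope.comp hmap
    apply hcomp.congr
    intro h
    simp [slope, Function.comp]
    ring
  -- family of integrands
  set F : ℝ → ℝ → ℝ := fun h s => (((s + h) ^ p - s ^ p) / h) ^ r * Real.exp (-s) with hF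
  -- pointwise limit of F
  have hFlim : ∀ᵐ s ∂(volume.restrict (Ioi 0)),
      Tendsto (fun h : ℝ => F h s) (𝓝[>] 0) (𝓝 (g s)) := by
    filter_upwards [ae_restrict_mem measurableSet_Ioi] with s hs
    have hs0 : (0:ℝ) < s := hs
    have h1 : Tendsto (fun h : ℝ => (((s + h) ^ p - s ^ p) / h) ^ r) (𝓝[>] 0)
        (𝓝 ((p * s ^ (p - 1)) ^ r)) :=
      (hlim s hs0).rpow_const (Or.inr hr0.le)
    have h2 : (p * s ^ (p - 1)) ^ r = p ^ r * (s ^ (p - 1)) ^ r :=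
      Real.mul_rpow hp0.le (Real.rpow_nonneg hs0.le _)
    have h3 : (s ^ (p - 1)) ^ r = s ^ (a - 1) := by
      rw [← Real.rpow_mul hs0.le, hexp]
    have := h1.mul_const (Real.exp (-s))
    simp only [hF]
    convert this using 2
    rw [hg, h2, h3]; ring
  -- measurability
  have hFmeas : ∀ᶠ h in 𝓝[>] (0:ℝ),
      AEStronglyMeasurable (F h) (volume.restrict (Ioi 0)) := by
    filter_upwards [self_mem_nhdsWithin] with h hh
    apply Measurable.aestronglyMeasurable
    fun_prop
  -- bound
  have hFbound : ∀ᶠ h in 𝓝[>] (0:ℝ), ∀ᵐ s ∂(volume.restrict (Ioi 0)), ‖F h s‖ ≤ g s := by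
    filter_upwards [self_mem_nhdsWithin] with h hh
    filter_upwards [ae_restrict_mem measurableSet_Ioi] with s hs
    have hs0 : (0:ℝ) < s := hs
    have hdiffnn : 0 ≤ (s + h) ^ p - s ^ p :=
      sub_nonneg.mpr (Real.rpow_le_rpow hs0.le (le_add_of_nonneg_right hh.le) hp0.le)
    have hFnn : 0 ≤ F h s := by
      apply mul_nonneg _ (Real.exp_nonneg _)
      exact Real.rpow_nonneg (div_nonneg hdiffnn hh.le) _
    rw [Real.norm_eq_abs, abs_of_nonneg hFnn]
    have hb : ((s + h) ^ p - s ^ p) / h ≤ p * s ^ (p - 1) := by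
      rw [div_le_iff₀ hh]
      exact aux_rpow_diff_le hp0 hp1 hs0 hh
    have : (((s + h) ^ p - s ^ p) / h) ^ r ≤ (p * s ^ (p - 1)) ^ r :=
      Real.rpow_le_rpow (div_nonneg hdiffnn hh.le) hb hr0.le
    calc F h s ≤ (p * s ^ (p - 1)) ^ r * Real.exp (-s) :=
          mul_le_mul_of_nonneg_right this (Real.exp_nonneg _)
      _ = g s := by
          rw [hg, Real.mul_rpow hp0.le (Real.rpow_nonneg hs0.le _),
            ← Real.rpow_mul hs0.le, hexp]; ring
  -- dominated convergence
  have hkey : Tendsto (fun h : ℝ => ∫ s in Ioi (0:ℝ), F h s) (𝓝[>] 0)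
      (𝓝 (∫ s in Ioi (0:ℝ), g s)) :=
    tendsto_integral_filter_of_dominated_convergence g hFmeas hFbound hgint hFlim
  -- identify the limit value
  have hval : ∫ s in Ioi (0:ℝ), g s = p ^ r * Real.Gamma a := by
    simp only [hg]
    rw [Real.Gamma_eq_integral ha0, integral_const_mul]
  -- identify the functions
  apply Tendsto.congr' _ (by rw [← hval]; exact hkey)
  filter_upwards [self_mem_nhdsWithin] with h hh
  have hcongr : ∀ s ∈ Ioi (0:ℝ),
      F h s = (((s + h) ^ p - s ^ p) ^ r * Real.exp (-s)) / h ^ r := by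
    intro s hs
    have hs0 : (0:ℝ) < s := hs
    have hdiffnn : 0 ≤ (s + h) ^ p - s ^ p :=
      sub_nonneg.mpr (Real.rpow_le_rpow hs0.le (le_add_of_nonneg_right hh.le) hp0.le)
    simp only [hF]
    rw [Real.div_rpow hdiffnn hh.le]
    ring
  rw [setIntegral_congr_fun measurableSet_Ioi hcongr, integral_div]
end

section
/- Let S ~ Exp(1), D ∈ (0, 1/2), and q > (1/2 − D)^{−1}. Then, as h ↓ 0, E[((S + h)^{2D} − S^{2D})^{q/2}] / h^{Dq+1} converges to ∫_0^∞ ((1+x)^{2D} − x^{2D})^{q/2} dx, which is a finite positive constant. -/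
/-!
Substituting `s = h x` turns the numerator into
`h ^ (D q + 1) * ∫ x in Ioi 0, ((1 + x) ^ (2D) - x ^ (2D)) ^ (q / 2) * exp (-(h x))`,
so the claim is an Abelian limit `h ↓ 0` under the integral. Dominated convergence applies
because the integrand is continuous on `[0, 1]` and, by concavity of `x ↦ x ^ (2D)`, bounded by
`(2D) ^ (q / 2) * x ^ ((2D - 1) q / 2)` at infinity, which is integrable exactly when
`q > (1/2 - D)⁻¹`.
-/

open Real Set Filter Topology MeasureTheory

namespace RpowIncrement

variable {a p : ℝ}

lemma one_add_rpow_sub_rpow_nonneg (ha : 0 ≤ a) {x : ℝ} (hx : 0 ≤ x) :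
    0 ≤ (1 + x) ^ a - x ^ a :=
  sub_nonneg.2 (rpow_le_rpow hx (by linarith) ha)

lemma one_add_rpow_sub_rpow_pos (ha : 0 < a) {x : ℝ} (hx : 0 ≤ x) :
    0 < (1 + x) ^ a - x ^ a :=
  sub_pos.2 (rpow_lt_rpow hx (by linarith) ha)

lemma one_add_rpow_sub_rpow_le (ha₀ : 0 ≤ a) (ha₁ : a ≤ 1) {x : ℝ} (hx : 0 < x) :
    (1 + x) ^ a - x ^ a ≤ a * x ^ (a - 1) := by
  have hbern : (1 + x⁻¹) ^ a ≤ 1 + a * x⁻¹ :=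
    rpow_one_add_le_one_add_mul_self (by linarith [inv_pos.2 hx]) ha₀ ha₁
  have hfactor : (1 + x) ^ a = x ^ a * (1 + x⁻¹) ^ a := by
    rw [← mul_rpow hx.le (by positivity), mul_add, mul_inv_cancel₀ hx.ne', mul_one, add_comm]
  calc (1 + x) ^ a - x ^ a ≤ x ^ a * (1 + a * x⁻¹) - x ^ a := by
        rw [hfactor]; gcongr
    _ = a * x ^ (a - 1) := by rw [rpow_sub_one hx.ne']; ring

lemma continuous_one_add_rpow_sub_rpow_rpow (ha : 0 ≤ a) (hp : 0 ≤ p) :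
    Continuous fun x : ℝ => ((1 + x) ^ a - x ^ a) ^ p :=
  (((continuous_const.add continuous_id).rpow_const fun _ => Or.inr ha).sub
    (continuous_id.rpow_const fun _ => Or.inr ha)).rpow_const fun _ => Or.inr hp

lemma integrableOn_one_add_rpow_sub_rpow_rpow (ha : 0 ≤ a) (hp : 0 ≤ p)
    (hap : (a - 1) * p < -1) :
    IntegrableOn (fun x : ℝ => ((1 + x) ^ a - x ^ a) ^ p) (Ioi 0) := by
  have ha₁ : a ≤ 1 := by
    by_contra! h
    nlinarith
  have hcont := continuous_one_add_rpow_sub_rpow_rpow ha hp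
  have htail : IntegrableOn (fun x : ℝ => ((1 + x) ^ a - x ^ a) ^ p) (Ioi 1) := by
    refine Integrable.mono' ((integrableOn_Ioi_rpow_of_lt hap one_pos).const_mul (a ^ p))
      hcont.aestronglyMeasurable.restrict ?_
    filter_upwards [ae_restrict_mem measurableSet_Ioi] with x hx
    have hx : (0 : ℝ) < x := one_pos.trans hx
    have hpos := one_add_rpow_sub_rpow_nonneg ha hx.le
    rw [norm_of_nonneg (rpow_nonneg hpos _), rpow_mul hx.le,
      ← mul_rpow (by positivity) (by positivity)]
    exact rpow_le_rpow hpos (one_add_rpow_sub_rpow_le ha ha₁ hx) hp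
  simpa only [Ioc_union_Ioi_eq_Ioi zero_le_one] using
    (hcont.integrableOn_Ioc (a := 0) (b := 1)).union htail

lemma setIntegral_Ioi_one_add_rpow_sub_rpow_rpow_pos (ha : 0 < a)
    (hint : IntegrableOn (fun x : ℝ => ((1 + x) ^ a - x ^ a) ^ p) (Ioi 0)) :
    0 < ∫ x in Ioi (0 : ℝ), ((1 + x) ^ a - x ^ a) ^ p := by
  have hpos : ∀ x ∈ Ioi (0 : ℝ), 0 < ((1 + x) ^ a - x ^ a) ^ p := fun x hx =>
    rpow_pos_of_pos (one_add_rpow_sub_rpow_pos ha (le_of_lt hx)) p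
  have hsupp : Ioi 0 ⊆ Function.support fun x : ℝ => ((1 + x) ^ a - x ^ a) ^ p :=
    fun x hx => (hpos x hx).ne'
  rw [setIntegral_pos_iff_support_of_nonneg_ae
    ((ae_restrict_mem measurableSet_Ioi).mono fun x hx => (hpos x hx).le) hint,
    inter_eq_self_of_subset_right hsupp, volume_Ioi]
  exact ENNReal.zero_lt_top

lemma setIntegral_Ioi_add_rpow_sub_rpow_rpow_mul (ha : 0 ≤ a) {h : ℝ} (hh : 0 < h)
    (g : ℝ → ℝ) :
    ∫ s in Ioi 0, ((s + h) ^ a - s ^ a) ^ p * g s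
      = h ^ (a * p + 1) * ∫ x in Ioi 0, ((1 + x) ^ a - x ^ a) ^ p * g (h * x) := by
  have hsubst := integral_comp_mul_left_Ioi' (fun s => ((s + h) ^ a - s ^ a) ^ p * g s) 0 hh
  rw [mul_zero] at hsubst
  have hscaled : ∫ x in Ioi 0, ((h * x + h) ^ a - (h * x) ^ a) ^ p * g (h * x)
      = h ^ (a * p) * ∫ x in Ioi 0, ((1 + x) ^ a - x ^ a) ^ p * g (h * x) := by
    rw [← integral_const_mul]
    refine setIntegral_congr_fun measurableSet_Ioi fun x (hx : 0 < x) => ?_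
    have hincr : (h * x + h) ^ a - (h * x) ^ a = h ^ a * ((1 + x) ^ a - x ^ a) := by
      rw [show h * x + h = h * (1 + x) by ring, mul_rpow hh.le (by linarith),
        mul_rpow hh.le hx.le, mul_sub]
    rw [hincr, mul_rpow (by positivity) (one_add_rpow_sub_rpow_nonneg ha hx.le),
      ← rpow_mul hh.le, mul_assoc]
  rw [← hsubst, smul_eq_mul, hscaled, rpow_add hh, rpow_one]
  ring

end RpowIncrement

lemma tendsto_setIntegral_Ioi_mul_exp_neg_mul {f : ℝ → ℝ} (hf : IntegrableOn f (Ioi 0)) :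
    Tendsto (fun h => ∫ x in Ioi 0, f x * exp (-(h * x))) (𝓝[>] 0)
      (𝓝 (∫ x in Ioi 0, f x)) := by
  refine tendsto_integral_filter_of_dominated_convergence (fun x => ‖f x‖) ?_ ?_ hf.norm ?_
  · exact Eventually.of_forall fun h => hf.aestronglyMeasurable.mul
      (by fun_prop : Continuous fun x => exp (-(h * x))).aestronglyMeasurable
  · filter_upwards [self_mem_nhdsWithin] with h (hh : 0 < h)
    filter_upwards [ae_restrict_mem measurableSet_Ioi] with x (hx : 0 < x)
    rw [norm_mul, norm_of_nonneg (exp_nonneg _)]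
    exact mul_le_of_le_one_right (norm_nonneg _)
      (exp_le_one_iff.2 (by nlinarith [mul_pos hh hx]))
  · refine Eventually.of_forall fun x => ?_
    have hcont : Continuous fun h : ℝ => f x * exp (-(h * x)) := by fun_prop
    simpa using (hcont.tendsto 0).mono_left nhdsWithin_le_nhds

open RpowIncrement in
theorem stmt_7 (D q : ℝ) (hD0 : 0 < D) (hD : D < 1/2)
    (hq : q > 1 / (1/2 - D)) :
    MeasureTheory.IntegrableOn
      (fun x : ℝ => ((1 + x) ^ (2 * D) - x ^ (2 * D)) ^ (q / 2)) (Set.Ioi 0) ∧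
    0 < ∫ x in Set.Ioi (0:ℝ), ((1 + x) ^ (2 * D) - x ^ (2 * D)) ^ (q / 2) ∧
    Filter.Tendsto
      (fun h : ℝ =>
        (∫ s in Set.Ioi (0:ℝ),
          ((s + h) ^ (2 * D) - s ^ (2 * D)) ^ (q / 2) * Real.exp (-s)) / h ^ (D * q + 1))
      (nhdsWithin 0 (Set.Ioi 0))
      (nhds (∫ x in Set.Ioi (0:ℝ), ((1 + x) ^ (2 * D) - x ^ (2 * D)) ^ (q / 2))) := by
  have ha : 0 < 2 * D := by linarith
  have hgap : 0 < 1 / 2 - D := by linarith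
  have hq1 : 1 < q * (1 / 2 - D) := by rwa [gt_iff_lt, div_lt_iff₀ hgap] at hq
  have hp : 0 ≤ q / 2 := by nlinarith
  have hap : (2 * D - 1) * (q / 2) < -1 := by linarith
  have hint := integrableOn_one_add_rpow_sub_rpow_rpow ha.le hp hap
  refine ⟨hint, setIntegral_Ioi_one_add_rpow_sub_rpow_rpow_pos ha hint,
    (tendsto_setIntegral_Ioi_mul_exp_neg_mul hint).congr' ?_⟩
  filter_upwards [self_mem_nhdsWithin] with h (hh : 0 < h)
  rw [setIntegral_Ioi_add_rpow_sub_rpow_rpow_mul ha.le hh, show 2 * D * (q / 2) = D * q by ring,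
    mul_div_cancel_left₀ _ (rpow_pos_of_pos hh _).ne']
end

section
/- Let D ∈ (0, 1/2) and set q* = (1/2 − D)^{−1}. Then, as h ↓ 0, ∫_0^∞ ((1+x)^{2D} − x^{2D})^{q*/2} e^{−hx} dx is asymptotically equivalent to (2D)^{q*/2}·log(1/h). -/
/-! With `s = 2D` and `p = q*/2` one has `(1 - s) p = 1`, and since `(1+x)^s - x^s ~ s x^(s-1)`,
the integrand `f` satisfies `x f(x) → s^p`. For any `f ≥ 0` with `x f(x) → c`, split the
Laplace integral at `A` and `1/h`: on `(0, A]` it is bounded; on `[1/h, ∞)` the bound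
`f ≤ (c+ε)/x ≤ (c+ε) h` against `e^{-hx}` gives at most `c + ε`; and on `[A, 1/h]` the bounds
`1 - hx ≤ e^{-hx} ≤ 1` and `f ≈ c/x` give `c log(1/h) + O(1)` up to `ε log(1/h)`. -/

open Real Set Filter Topology MeasureTheory

lemma tendsto_rpow_one_sub_mul_one_add_rpow_sub_rpow (s : ℝ) :
    Tendsto (fun x : ℝ => x ^ (1 - s) * ((1 + x) ^ s - x ^ s)) atTop (𝓝 s) := by
  have hderiv : HasDerivAt (fun u : ℝ => (1 + u) ^ s) s 0 := by
    simpa using ((hasDerivAt_id (0 : ℝ)).const_add 1).rpow_const (p := s) (by norm_num)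
  -- `x^(1-s) ((1+x)^s - x^s) = x ((1 + x⁻¹)^s - 1)` is a difference quotient of `hderiv`.
  refine (hderiv.tendsto_slope_zero_right.comp tendsto_inv_atTop_nhdsGT_zero).congr' ?_
  filter_upwards [eventually_gt_atTop 0] with x hx
  have hsplit : (1 + x) ^ s = x ^ s * (1 + x⁻¹) ^ s := by
    rw [← mul_rpow hx.le (by positivity), mul_add, mul_inv_cancel₀ hx.ne', mul_one, add_comm]
  rw [Function.comp_apply, hsplit, inv_inv, smul_eq_mul, zero_add, add_zero, one_rpow]
  have hpow : x ^ (1 - s) * x ^ s = x := by rw [← rpow_add hx, sub_add_cancel, rpow_one]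
  linear_combination (1 - (1 + x⁻¹) ^ s) * hpow

lemma tendsto_mul_one_add_rpow_sub_rpow_rpow {s p : ℝ} (hs : 0 < s) (hp : (1 - s) * p = 1) :
    Tendsto (fun x : ℝ => x * ((1 + x) ^ s - x ^ s) ^ p) atTop (𝓝 (s ^ p)) := by
  refine ((continuousAt_rpow_const s p (Or.inl hs.ne')).tendsto.comp
    (tendsto_rpow_one_sub_mul_one_add_rpow_sub_rpow s)).congr' ?_
  filter_upwards [eventually_gt_atTop 0] with x hx
  have hdiff : 0 ≤ (1 + x) ^ s - x ^ s :=
    sub_nonneg.2 (rpow_le_rpow hx.le (by linarith) hs.le)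
  rw [Function.comp_apply, mul_rpow (by positivity) hdiff, ← rpow_mul hx.le, hp, rpow_one]

lemma tendsto_div_of_abs_sub_mul_le {ι : Type*} {l : Filter ι} {I L : ι → ℝ} {c : ℝ}
    (hL : Tendsto L l atTop)
    (hI : ∀ᶠ ε in 𝓝[>] 0, ∃ C, ∀ᶠ i in l, |I i - c * L i| ≤ ε * L i + C) :
    Tendsto (fun i => I i / L i) l (𝓝 c) := by
  rw [Metric.tendsto_nhds]
  intro δ hδ
  obtain ⟨ε, ⟨C, hC⟩, hε0, hεδ⟩ := (hI.and (Ioo_mem_nhdsGT (half_pos hδ))).exists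
  filter_upwards [hC, hL.eventually_gt_atTop 0, hL.eventually_gt_atTop (2 * C / δ)]
    with i hi hL0 hLC
  rw [div_lt_iff₀ hδ] at hLC
  have hdiv : I i / L i - c = (I i - c * L i) / L i := by field_simp
  rw [Real.dist_eq, hdiv, abs_div, abs_of_pos hL0, div_lt_iff₀ hL0]
  nlinarith

lemma integrableOn_inv_Ioc {a b : ℝ} (ha : 0 < a) : IntegrableOn (fun x : ℝ => x⁻¹) (Ioc a b) :=
  ((continuousOn_inv₀.mono fun _ hx => (ha.trans_le hx.1).ne').integrableOn_Icc).mono_set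
    Ioc_subset_Icc_self

lemma setIntegral_Ioc_inv {a b : ℝ} (ha : 0 < a) (hab : a ≤ b) :
    ∫ x in Ioc a b, x⁻¹ = log b - log a := by
  rw [← intervalIntegral.integral_of_le hab, integral_inv_of_pos ha (ha.trans_le hab),
    log_div (ha.trans_le hab).ne' ha.ne']

section LaplaceTransform

variable {f : ℝ → ℝ} {a b h A B : ℝ}

lemma integrableOn_mul_exp_neg (hf : LocallyIntegrableOn f (Ici 0)) (hA : 0 ≤ A)
    (hfA : ∀ x ≥ A, |f x| ≤ B) (hh : 0 < h) :
    IntegrableOn (fun x => f x * exp (-(h * x))) (Ioi 0) := by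
  have hexp : Continuous fun x => exp (-(h * x)) := by fun_prop
  rw [← Ioc_union_Ioi_eq_Ioi hA]
  refine IntegrableOn.union ?_ ?_
  · exact ((hf.integrableOn_compact_subset Icc_subset_Ici_self isCompact_Icc).mul_continuousOn
      hexp.continuousOn isCompact_Icc).mono_set Ioc_subset_Icc_self
  · refine Integrable.mono' ((exp_neg_integrableOn_Ioi A hh).const_mul B) ?_ ?_
    · exact (hf.aestronglyMeasurable.mono_set (Ioi_subset_Ici hA)).mul hexp.aestronglyMeasurable
    · filter_upwards [ae_restrict_mem measurableSet_Ioi] with x hx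
      rw [norm_mul, norm_of_nonneg (exp_nonneg _), neg_mul]
      exact mul_le_mul_of_nonneg_right (hfA x hx.le) (exp_nonneg _)

lemma mul_log_sub_le_integral_mul_exp_neg
    (hint : IntegrableOn (fun x => f x * exp (-(h * x))) (Ioi 0)) (hf0 : ∀ x > 0, 0 ≤ f x)
    (ha : 0 ≤ a) (hA : 0 < A) (hfA : ∀ x ≥ A, a / x ≤ f x) (hh : 0 < h) (hAh : A ≤ 1 / h) :
    a * (log (1 / h) - log A - 1) ≤ ∫ x in Ioi 0, f x * exp (-(h * x)) := by
  have hsub : Ioc A (1 / h) ⊆ Ioi 0 := fun x hx => hA.trans hx.1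
  have hconst : IntegrableOn (fun _ => h) (Ioc A (1 / h)) :=
    integrableOn_const measure_Ioc_lt_top.ne
  calc a * (log (1 / h) - log A - 1)
      ≤ a * ((log (1 / h) - log A) - (1 / h - A) * h) := by
        gcongr
        rw [sub_mul, one_div_mul_cancel hh.ne']
        nlinarith
    _ = ∫ x in Ioc A (1 / h), a * (x⁻¹ - h) := by
        rw [integral_const_mul, integral_sub (integrableOn_inv_Ioc hA) hconst,
          setIntegral_Ioc_inv hA hAh, setIntegral_const, volume_real_Ioc_of_le hAh, smul_eq_mul]
    _ ≤ ∫ x in Ioc A (1 / h), f x * exp (-(h * x)) := by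
        refine setIntegral_mono_on (((integrableOn_inv_Ioc hA).sub hconst).const_mul a)
          (hint.mono_set hsub) measurableSet_Ioc fun x hx => ?_
        have hx0 : 0 < x := hA.trans hx.1
        have hhx : 0 ≤ 1 - h * x := by
          have := (le_div_iff₀ hh).1 hx.2
          nlinarith
        calc a * (x⁻¹ - h) = a / x * (1 - h * x) := by field_simp
          _ ≤ f x * exp (-(h * x)) := by
            gcongr
            · exact (div_nonneg ha hx0.le).trans (hfA x hx.1.le)
            · exact hfA x hx.1.le
            · linarith [add_one_le_exp (-(h * x))]
    _ ≤ ∫ x in Ioi 0, f x * exp (-(h * x)) :=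
        setIntegral_mono_set hint
          ((ae_restrict_mem measurableSet_Ioi).mono fun x hx =>
            mul_nonneg (hf0 x hx) (exp_nonneg _))
          hsub.eventuallyLE

lemma integral_mul_exp_neg_le
    (hint : IntegrableOn (fun x => f x * exp (-(h * x))) (Ioi 0)) (hf0 : ∀ x > 0, 0 ≤ f x)
    (hfi : IntegrableOn f (Ioc 0 A)) (hA : 0 < A) (hfA : ∀ x ≥ A, f x ≤ b / x) (hh : 0 < h)
    (hAh : A ≤ 1 / h) :
    ∫ x in Ioi 0, f x * exp (-(h * x)) ≤ (∫ x in Ioc 0 A, f x) + b * (log (1 / h) - log A) + b := by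
  have hb : 0 ≤ b := by
    have := mul_nonneg ((hf0 A hA).trans (hfA A le_rfl)) hA.le
    rwa [div_mul_cancel₀ _ hA.ne'] at this
  have hh' : 0 < 1 / h := by positivity
  have hle : ∀ x > 0, f x * exp (-(h * x)) ≤ f x := fun x hx =>
    mul_le_of_le_one_right (hf0 x hx) (exp_le_one_iff.2 (by nlinarith))
  have hsplit : ∫ x in Ioi 0, f x * exp (-(h * x)) = (∫ x in Ioc 0 A, f x * exp (-(h * x))) +
      (∫ x in Ioc A (1 / h), f x * exp (-(h * x))) + ∫ x in Ioi (1 / h), f x * exp (-(h * x)) := by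
    rw [← intervalIntegral.integral_interval_add_Ioi hint (hint.mono_set (Ioi_subset_Ioi hA.le)),
      ← intervalIntegral.integral_interval_add_Ioi (hint.mono_set (Ioi_subset_Ioi hA.le))
        (hint.mono_set (Ioi_subset_Ioi hh'.le)),
      intervalIntegral.integral_of_le hA.le, intervalIntegral.integral_of_le hAh, add_assoc]
  have hnear : ∫ x in Ioc 0 A, f x * exp (-(h * x)) ≤ ∫ x in Ioc 0 A, f x :=
    setIntegral_mono_on (hint.mono_set Ioc_subset_Ioi_self) hfi measurableSet_Ioc
      fun x hx => hle x hx.1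
  have hmid : ∫ x in Ioc A (1 / h), f x * exp (-(h * x)) ≤ b * (log (1 / h) - log A) := by
    calc _ ≤ ∫ x in Ioc A (1 / h), b * x⁻¹ :=
          setIntegral_mono_on (hint.mono_set fun x hx => hA.trans hx.1)
            ((integrableOn_inv_Ioc hA).const_mul b) measurableSet_Ioc fun x hx =>
              (hle x (hA.trans hx.1)).trans (hfA x hx.1.le)
      _ = _ := by rw [integral_const_mul, setIntegral_Ioc_inv hA hAh]
  have htail : ∫ x in Ioi (1 / h), f x * exp (-(h * x)) ≤ b := by
    calc _ ≤ ∫ x in Ioi (1 / h), b * h * exp (-(h * x)) := by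
          refine setIntegral_mono_on (hint.mono_set (Ioi_subset_Ioi hh'.le)) ?_ measurableSet_Ioi
            fun x hx => ?_
          · have := (exp_neg_integrableOn_Ioi (1 / h) hh).const_mul (b * h)
            simp only [neg_mul] at this
            exact this
          have hx0 : 0 < x := hh'.trans hx
          gcongr
          refine (hfA x (hAh.trans hx.le)).trans ?_
          rw [div_le_iff₀ hx0, mul_assoc]
          refine le_mul_of_one_le_right hb ?_
          linarith [(div_lt_iff₀ hh).1 hx, mul_comm h x]
      _ = b * exp (-1) := by
          rw [integral_const_mul, integral_comp_mul_left_Ioi (fun x => exp (-x)) _ hh,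
            integral_exp_neg_Ioi, smul_eq_mul, mul_one_div_cancel hh.ne']
          field_simp
      _ ≤ b := mul_le_of_le_one_right hb (exp_le_one_iff.2 (by norm_num))
  linarith

end LaplaceTransform

lemma exists_forall_ge_div_le_and_le_div {f : ℝ → ℝ} {c ε : ℝ}
    (hxf : Tendsto (fun x => x * f x) atTop (𝓝 c)) (hε : 0 < ε) :
    ∃ A ≥ 1, ∀ x ≥ A, (c - ε) / x ≤ f x ∧ f x ≤ (c + ε) / x := by
  obtain ⟨A, hA⟩ := eventually_atTop.1
    ((hxf.eventually (Icc_mem_nhds (sub_lt_self c hε) (lt_add_of_pos_right c hε))).and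
      (eventually_ge_atTop 1))
  refine ⟨max A 1, le_max_right _ _, fun x hx => ?_⟩
  obtain ⟨⟨hlow, hup⟩, hx1⟩ := hA x (le_of_max_le_left hx)
  have hx0 : 0 < x := one_pos.trans_le hx1
  rw [div_le_iff₀ hx0, le_div_iff₀ hx0, mul_comm (f x)]
  exact ⟨hlow, hup⟩

theorem tendsto_integral_mul_exp_neg_div_log {f : ℝ → ℝ} {c : ℝ}
    (hf : LocallyIntegrableOn f (Ici 0)) (hf0 : ∀ x > 0, 0 ≤ f x) (hc : 0 < c)
    (hxf : Tendsto (fun x => x * f x) atTop (𝓝 c)) :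
    Tendsto (fun h => (∫ x in Ioi 0, f x * exp (-(h * x))) / log (1 / h)) (𝓝[>] 0) (𝓝 c) := by
  have hlog : Tendsto (fun h : ℝ => log (1 / h)) (𝓝[>] 0) atTop := by
    simpa only [one_div, Function.comp_def] using tendsto_log_atTop.comp tendsto_inv_nhdsGT_zero
  refine tendsto_div_of_abs_sub_mul_le hlog ?_
  filter_upwards [Ioo_mem_nhdsGT hc] with ε ⟨hε0, hεc⟩
  obtain ⟨A, hA1, hfA⟩ := exists_forall_ge_div_le_and_le_div hxf hε0
  have hA0 : 0 < A := one_pos.trans_le hA1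
  have hfi : IntegrableOn f (Ioc 0 A) :=
    (hf.integrableOn_compact_subset Icc_subset_Ici_self isCompact_Icc).mono_set
      Ioc_subset_Icc_self
  have hJ : 0 ≤ ∫ x in Ioc 0 A, f x := setIntegral_nonneg measurableSet_Ioc fun x hx => hf0 x hx.1
  have hlogA : 0 ≤ log A := log_nonneg hA1
  refine ⟨(∫ x in Ioc 0 A, f x) + (c + ε) * (log A + 1), ?_⟩
  filter_upwards [Ioo_mem_nhdsGT (one_div_pos.2 hA0)] with h ⟨hh, hhA⟩
  have hAh : A ≤ 1 / h := by
    rw [le_div_iff₀ hh]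
    linarith [(lt_div_iff₀ hA0).1 hhA]
  have hbound : ∀ x ≥ A, |f x| ≤ c + ε := fun x hx => by
    rw [abs_of_nonneg (hf0 x (hA0.trans_le hx))]
    exact (hfA x hx).2.trans (div_le_self (by linarith) (hA1.trans hx))
  have hint := integrableOn_mul_exp_neg hf hA0.le hbound hh
  have hlow := mul_log_sub_le_integral_mul_exp_neg hint hf0 (sub_nonneg.2 hεc.le) hA0
    (fun x hx => (hfA x hx).1) hh hAh
  have hup := integral_mul_exp_neg_le hint hf0 hfi hA0 (fun x hx => (hfA x hx).2) hh hAh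
  rw [abs_le]
  constructor <;> nlinarith

theorem stmt_8 (D : ℝ) (hD0 : 0 < D) (hD : D < 1/2) :
    Filter.Tendsto
      (fun h : ℝ =>
        (∫ x in Set.Ioi (0:ℝ),
          ((1 + x) ^ (2 * D) - x ^ (2 * D)) ^ ((1 / (1/2 - D)) / 2) * Real.exp (-(h * x))) /
        ((2 * D) ^ ((1 / (1/2 - D)) / 2) * Real.log (1 / h)))
      (nhdsWithin 0 (Set.Ioi 0)) (nhds 1) := by
  have hp : (1 - 2 * D) * ((1 / (1/2 - D)) / 2) = 1 := by
    have : 1 - 2 * D ≠ 0 := by linarith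
    field_simp
  set p := (1 / (1/2 - D)) / 2
  have hs : 0 < 2 * D := by linarith
  have hcont : Continuous fun x : ℝ => ((1 + x) ^ (2 * D) - x ^ (2 * D)) ^ p := by
    fun_prop (disch := positivity)
  have hf0 : ∀ x > (0 : ℝ), 0 ≤ ((1 + x) ^ (2 * D) - x ^ (2 * D)) ^ p := fun x hx =>
    rpow_nonneg (sub_nonneg.2 (rpow_le_rpow hx.le (by linarith) hs.le)) p
  have hc : 0 < (2 * D) ^ p := rpow_pos_of_pos hs p
  have key := (tendsto_integral_mul_exp_neg_div_log
    (hcont.continuousOn.locallyIntegrableOn measurableSet_Ici) hf0 hc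
    (tendsto_mul_one_add_rpow_sub_rpow_rpow hs hp)).div_const ((2 * D) ^ p)
  rw [div_self hc.ne'] at key
  simpa only [div_div, mul_comm] using key
end

section
/- Let W be a standard Gaussian random variable, S ~ Exp(1) independent of W, and D ∈ (0, 1/2). Define f to be the density of √(2D)·λ^{1/2−D}·σ·S^{D−1/2}·W, where σ is a positive random variable independent of S, W with all moments finite. Then ∫ |x|^q f(x) dx < ∞ if and only if q < (1/2 − D)^{−1}. -/
/-!
The modulus of the product factorises, `|c σ S^a W|^q = c^q |σ|^q · |S^a|^q · |W|^q` with
`a = D - 1/2`, and the three factors are independent coordinates of a product measure. Since `σ`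
and `W` have all moments and are almost surely nonzero, the product is integrable exactly when
`S^(a q)` is integrable against `e^{-s} ds` on `(0, ∞)`. At infinity the exponential weight makes
every power integrable, while near `0` the weight is bounded above and below, so the condition is
the one for `s^(a q)` on `(0, 1)`: `a q > -1`, i.e. `q < (1/2 - D)⁻¹`.
-/

open MeasureTheory ProbabilityTheory Real Set Filter

section ProductIntegrability

variable {α β : Type*} [MeasurableSpace α] [MeasurableSpace β] {μ : Measure α} {ν : Measure β}
  [SFinite μ] [SFinite ν] {f : α → ℝ} {g : β → ℝ}

lemma integrable_mul_prod_iff_right (hf : Integrable f μ) (hf0 : ∃ᵐ x ∂μ, f x ≠ 0) :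
    Integrable (fun p : α × β => f p.1 * g p.2) (μ.prod ν) ↔ Integrable g ν := by
  refine ⟨fun hfg => ?_, hf.mul_prod⟩
  obtain ⟨x, hx, hxg⟩ := (hf0.and_eventually hfg.prod_right_ae).exists
  exact (integrable_const_mul_iff (isUnit_iff_ne_zero.mpr hx) g).mp hxg

lemma integrable_mul_prod_iff_left (hg : Integrable g ν) (hg0 : ∃ᵐ y ∂ν, g y ≠ 0) :
    Integrable (fun p : α × β => f p.1 * g p.2) (μ.prod ν) ↔ Integrable f μ := by
  refine ⟨fun hfg => ?_, fun hf => hf.mul_prod hg⟩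
  obtain ⟨y, hy, hyf⟩ := (hg0.and_eventually hfg.prod_left_ae).exists
  exact (integrable_mul_const_iff (isUnit_iff_ne_zero.mpr hy) f).mp hyf

end ProductIntegrability

lemma frequently_abs_rpow_ne_zero {α : Type*} [MeasurableSpace α] {μ : Measure α} [NeZero μ]
    {f : α → ℝ} (hf : ∀ᵐ x ∂μ, f x ≠ 0) (q : ℝ) : ∃ᵐ x ∂μ, |f x| ^ q ≠ 0 :=
  (hf.mono fun _ hx => (rpow_pos_of_pos (abs_pos.mpr hx) q).ne').frequently

lemma ae_ne_gaussianReal (m : ℝ) {v : NNReal} (hv : v ≠ 0) (a : ℝ) :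
    ∀ᵐ x ∂(gaussianReal m v), x ≠ a :=
  (gaussianReal_absolutelyContinuous m hv).ae_le (volume.ae_ne a)

lemma integrable_abs_rpow_gaussianReal (m : ℝ) (v : NNReal) {q : ℝ} (hq : 0 < q) :
    Integrable (fun x : ℝ => |x| ^ q) (gaussianReal m v) := by
  simpa [Real.coe_toNNReal _ hq.le] using
    (memLp_id_gaussianReal (μ := m) (v := v) q.toNNReal).integrable_norm_rpow
      (by simp [hq]) ENNReal.coe_ne_top

lemma integrable_rpow_exponential_iff {r : ℝ} :
    Integrable (fun s : ℝ => s ^ r)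
      ((volume.restrict (Ioi (0:ℝ))).withDensity (fun s => ENNReal.ofReal (exp (-s))))
    ↔ -1 < r := by
  rw [integrable_withDensity_iff measurable_neg.exp.ennreal_ofReal
      (Eventually.of_forall fun _ => ENNReal.ofReal_lt_top)]
  simp_rw [ENNReal.toReal_ofReal (exp_nonneg _)]
  constructor
  · intro h
    -- on `(0, 1)` the weight `e^{-s}` is at least `e^{-1}`
    have hIoo : IntegrableOn (fun s : ℝ => s ^ r) (Ioo 0 1) := by
      refine ((IntegrableOn.mono_set h Ioo_subset_Ioi_self).const_mul (exp 1)).mono'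
        (measurable_id.pow_const r).aestronglyMeasurable ?_
      filter_upwards [ae_restrict_mem measurableSet_Ioo] with s hs
      have hpos : 0 < s ^ r := rpow_pos_of_pos hs.1 r
      have hweight : 1 ≤ exp 1 * exp (-s) := by
        rw [← exp_add]
        exact one_le_exp (by linarith [hs.2])
      rw [norm_of_nonneg hpos.le]
      nlinarith
    simpa using (intervalIntegral.integrableOn_Ioo_rpow_iff zero_lt_one).mp hIoo
  · intro hr
    refine (GammaIntegral_convergent (s := r + 1) (by linarith)).congr_fun (fun s _ => ?_)
      measurableSet_Ioi
    simp only [add_sub_cancel_right, mul_comm]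

lemma integrable_abs_rpow_rpow_exponential_iff {a q : ℝ} :
    Integrable (fun s : ℝ => |s ^ a| ^ q)
      ((volume.restrict (Ioi (0:ℝ))).withDensity (fun s => ENNReal.ofReal (exp (-s))))
    ↔ -1 < a * q := by
  rw [← integrable_rpow_exponential_iff]
  refine integrable_congr ((withDensity_absolutelyContinuous _ _).ae_le ?_)
  filter_upwards [ae_restrict_mem measurableSet_Ioi] with s hs
  rw [abs_of_pos (rpow_pos_of_pos hs _), ← rpow_mul hs.le]

theorem stmt_16 (D lam : ℝ) (hD0 : 0 < D) (hD : D < 1/2) (hlam : 0 < lam)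
    (ν : Measure ℝ) [IsProbabilityMeasure ν]
    (hνpos : ν (Set.Ioi 0) = 1)
    (hνmom : ∀ r : ℝ, 0 < r → Integrable (fun x : ℝ => |x| ^ r) ν)
    (q : ℝ) (hq : 0 < q) :
    Integrable
      (fun p : ℝ × ℝ × ℝ =>
        |Real.sqrt (2 * D) * lam ^ (1/2 - D) * p.1 * p.2.1 ^ (D - 1/2) * p.2.2| ^ q)
      (ν.prod
        (((volume.restrict (Set.Ioi (0:ℝ))).withDensity
            (fun s => ENNReal.ofReal (Real.exp (-s)))).prod
          (gaussianReal 0 1)))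
    ↔ q < 1 / (1/2 - D) := by
  set c := √(2 * D) * lam ^ (1/2 - D)
  have hc : 0 < c := by positivity
  have hsplit : (fun p : ℝ × ℝ × ℝ => |c * p.1 * p.2.1 ^ (D - 1/2) * p.2.2| ^ q)
      = fun p => c ^ q * (|p.1| ^ q * (|p.2.1 ^ (D - 1/2)| ^ q * |p.2.2| ^ q)) := by
    funext p
    simp only [abs_mul, abs_of_pos hc]
    rw [mul_rpow (by positivity) (by positivity), mul_rpow (by positivity) (by positivity),
      mul_rpow (by positivity) (by positivity)]
    ring
  have hσ : ∀ᵐ x ∂ν, x ≠ 0 := by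
    have hσpos : ∀ᵐ x ∂ν, x ∈ Ioi 0 := by
      rw [ae_mem_iff_measure_eq measurableSet_Ioi.nullMeasurableSet, hνpos, measure_univ]
    exact hσpos.mono fun x hx => ne_of_gt hx
  rw [hsplit, integrable_const_mul_iff (isUnit_iff_ne_zero.mpr (rpow_pos_of_pos hc q).ne')]
  refine (integrable_mul_prod_iff_right (hνmom q hq) (frequently_abs_rpow_ne_zero hσ q)).trans <|
    (integrable_mul_prod_iff_left (f := fun s => |s ^ (D - 1/2)| ^ q)
      (integrable_abs_rpow_gaussianReal 0 1 hq)
      (frequently_abs_rpow_ne_zero (ae_ne_gaussianReal 0 one_ne_zero 0) q)).trans ?_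
  rw [integrable_abs_rpow_rpow_exponential_iff, lt_div_iff₀ (by linarith)]
  constructor <;> intro h <;> linarith
end
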